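/- The conic x₁²+x₂²+x₃² = 0 is an integral curve of η: substituting x₂ = (1−t²)/(i(t²+1)), x₃ = −2t/(i(t²+1)) (so that 1 + x₂² + x₃² = 0 identically), the pullback of η = (x₃²+1)dx₂² − 2x₂x₃dx₂dx₃ + (x₂²+1)dx₃² vanishes identically. -/

import Mathlib

/-- The conic `x₁²+x₂²+x₃² = 0` is an integral curve of
`η = (x₃²+1)dx₂² − 2x₂x₃dx₂dx₃ + (x₂²+1)dx₃²`: for
`x₂ = (1−t²)/(i(t²+1))` and `x₃ = −2t/(i(t²+1))` one has `1 + x₂² + x₃² = 0`,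
and the pullback of `η` along any derivation with respect to `t` vanishes. -/
theorem conic_integral_curve {K : Type*} [Field K] [CharZero K]
    (i t : K) (hi : i ^ 2 = -1) (ht : t ^ 2 + 1 ≠ 0)
    (d : Derivation ℚ K K) (hdt : d t = 1) :
    let x₂ : K := (1 - t ^ 2) / (i * (t ^ 2 + 1))
    let x₃ : K := -2 * t / (i * (t ^ 2 + 1))
    (1 + x₂ ^ 2 + x₃ ^ 2 = 0) ∧
    ((x₃ ^ 2 + 1) * (d x₂) ^ 2 - 2 * x₂ * x₃ * (d x₂) * (d x₃)
        + (x₂ ^ 2 + 1) * (d x₃) ^ 2 = 0) := by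
  intro x₂ x₃
  have hi0 : i ≠ 0 := by
    intro h; rw [h] at hi; norm_num at hi
  have hdi : d i = 0 := by
    have h2 : d (i ^ 2) = 0 := by rw [hi]; simp
    rw [Derivation.leibniz_pow] at h2
    simp only [smul_eq_mul, Nat.cast_ofNat, pow_one] at h2
    have h2' : (2 : K) * (i * d i) = 0 := by simpa using h2
    rcases mul_eq_zero.mp h2' with h | h
    · exact absurd h two_ne_zero
    · rcases mul_eq_zero.mp h with h' | h'
      · exact absurd h' hi0
      · exact h'
  have hden : i * (t ^ 2 + 1) ≠ 0 := mul_ne_zero hi0 ht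
  have hdden : d (i * (t ^ 2 + 1)) = 2 * i * t := by
    rw [Derivation.leibniz]
    simp [hdi, Derivation.leibniz_pow, hdt, smul_eq_mul]
    ring
  have hd2 : d x₂ = 4 * i * t / (t ^ 2 + 1) ^ 2 := by
    show d ((1 - t ^ 2) / (i * (t ^ 2 + 1))) = _
    rw [Derivation.leibniz_div]
    simp only [smul_eq_mul, hdden, map_sub, Derivation.leibniz_pow, Derivation.map_one_eq_zero,
      hdt, smul_eq_mul, Nat.cast_ofNat, pow_one, mul_one]
    field_simp
    linear_combination (-4 * t) * hi
  have hd3 : d x₃ = 2 * i * (1 - t ^ 2) / (t ^ 2 + 1) ^ 2 := by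
    show d (-2 * t / (i * (t ^ 2 + 1))) = _
    rw [Derivation.leibniz_div]
    have hc : d (-2 * t) = -2 := by
      rw [Derivation.leibniz]
      have h2 : d (-2 : K) = 0 := by
        have := d.map_algebraMap (-2 : ℚ)
        simpa using this
      simp [h2, hdt]
    simp only [smul_eq_mul, hdden, hc]
    field_simp
    linear_combination (t ^ 2 - 1) * hi
  have hx₂ : x₂ = -i * (1 - t ^ 2) / (t ^ 2 + 1) := by
    show (1 - t ^ 2) / (i * (t ^ 2 + 1)) = _
    field_simp
    linear_combination (1 - t ^ 2) * hi
  have hx₃ : x₃ = 2 * i * t / (t ^ 2 + 1) := by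
    show -2 * t / (i * (t ^ 2 + 1)) = _
    field_simp
    linear_combination (-t) * hi
  constructor
  · rw [hx₂, hx₃]
    field_simp
    linear_combination ((1 - t ^ 2) ^ 2 + 4 * t ^ 2) * hi
  · have hA : (d x₂) ^ 2 = -16 * t ^ 2 / (t ^ 2 + 1) ^ 4 := by
      rw [hd2]; field_simp; linear_combination (16 * t ^ 2) * hi
    have hB : (d x₃) ^ 2 = -4 * (1 - t ^ 2) ^ 2 / (t ^ 2 + 1) ^ 4 := by
      rw [hd3]; field_simp; linear_combination (4 * (1 - t ^ 2) ^ 2) * hi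
    have hC : (d x₂) * (d x₃) = -8 * t * (1 - t ^ 2) / (t ^ 2 + 1) ^ 4 := by
      rw [hd2, hd3]; field_simp; linear_combination (8 * t * (1 - t ^ 2)) * hi
    have hx23 : x₂ * x₃ = 2 * t * (1 - t ^ 2) / (t ^ 2 + 1) ^ 2 := by
      rw [hx₂, hx₃]; field_simp; linear_combination (-t * (1 - t ^ 2)) * hi
    have hx2sq : x₂ ^ 2 = -(1 - t ^ 2) ^ 2 / (t ^ 2 + 1) ^ 2 := by
      rw [hx₂]; field_simp; linear_combination ((1 - t ^ 2) ^ 2 * (t ^ 2 + 1) ^ 2 - 2 * t ^ 2 + 3 * t ^ 4 - t ^ 8) * hi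
    have hx3sq : x₃ ^ 2 = -4 * t ^ 2 / (t ^ 2 + 1) ^ 2 := by
      rw [hx₃]; field_simp; linear_combination (4 * t ^ 2 * (t ^ 2 + 1) ^ 2 - 8 * t ^ 4 - 4 * t ^ 6) * hi
    calc (x₃ ^ 2 + 1) * (d x₂) ^ 2 - 2 * x₂ * x₃ * (d x₂) * (d x₃)
        + (x₂ ^ 2 + 1) * (d x₃) ^ 2
        = (x₃ ^ 2 + 1) * ((d x₂) ^ 2) - 2 * (x₂ * x₃) * ((d x₂) * (d x₃))
          + (x₂ ^ 2 + 1) * ((d x₃) ^ 2) := by ring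
      _ = 0 := by
        rw [hA, hB, hC, hx23, hx2sq, hx3sq]
        field_simp
        ring
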